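/- Let G = (V,E) be a finite connected undirected graph with positive edge weights, let Q be a shortest path in G, let u ∈ V with u not on Q, and let ε > 0 be a real number. Then there exists a subset P of V(Q) with |P| ≤ 4/ε + 4 such that for every vertex v on Q there is a p ∈ P with d_G(u,p) + d_Q(p,v) ≤ (1+ε)·d_G(u,v). -/

import Mathlib

open SimpleGraph
open scoped Classical

/-- The weight of a walk in an edge-weighted graph: the sum of the weights of its edges. -/
noncomputable def walkWeight {V : Type*} (w : V → V → ℝ) {G : SimpleGraph V} {x y : V}
    (p : G.Walk x y) : ℝ :=
  (p.darts.map (fun d => w d.toProd.1 d.toProd.2)).sum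

/-- The (shortest-path) distance between two vertices of an edge-weighted graph:
the infimum of the weights of walks between them. -/
noncomputable def gdist {V : Type*} (G : SimpleGraph V) (w : V → V → ℝ) (x y : V) : ℝ :=
  sInf {c : ℝ | ∃ p : G.Walk x y, walkWeight w p = c}

/-- The distance along a path `Q` between two of its vertices `x` and `y`,
i.e. the weight of the subpath of `Q` between `x` and `y`, computed as the
difference of the weights of the prefixes of `Q` ending at `x` and at `y`
(junk value `0` if `x` or `y` is not on `Q`). -/
noncomputable def pathDist {V : Type*} (w : V → V → ℝ) {G : SimpleGraph V} {a b : V}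
    (Q : G.Walk a b) (x y : V) : ℝ :=
  if hx : x ∈ Q.support then
    if hy : y ∈ Q.support then
      |walkWeight w (Q.takeUntil x hx) - walkWeight w (Q.takeUntil y hy)|
    else 0
  else 0

/-- `Q` is a shortest path: it is a path and for all vertices `x, y` on `Q`, the weight of
the subpath of `Q` between `x` and `y` equals the distance between `x` and `y` in `G`. -/
def IsShortestPath {V : Type*} (G : SimpleGraph V) (w : V → V → ℝ) {a b : V}
    (Q : G.Walk a b) : Prop :=
  Q.IsPath ∧ ∀ x ∈ Q.support, ∀ y ∈ Q.support, pathDist w Q x y = gdist G w x y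

/-!
Parametrise `Q` by arc length `t` and put `f v = d(u, v)`. Since `Q` is a shortest path,
`f` is `1`-Lipschitz in `t` and `|t x - t y| ≤ f x + f y`. Let `c` be a vertex of `Q` closest
to `u`, at distance `D > 0`. Sweep from `c` to the right, taking as the next portal the first
vertex `q` that the current portal `p` does not serve within `1 + ε`: then
`f p + (t q - t p) > (1 + ε) f q`, so the potential `t - f` grows by more than `ε f q ≥ ε D`
at every new portal, while it stays in `[t c - D, t c + D]`. Hence each of the two sweeps
places at most `2 / ε` portals, and together with `c` there are at most `4 / ε + 1`.
-/

open Finset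

section WalkWeight

variable {V : Type*} {G : SimpleGraph V} (w : V → V → ℝ)

theorem walkWeight_nonneg (hpos : ∀ x y, G.Adj x y → 0 < w x y) {x y : V} (p : G.Walk x y) :
    0 ≤ walkWeight w p :=
  List.sum_nonneg fun _ hr ↦ by
    obtain ⟨d, -, rfl⟩ := List.mem_map.1 hr
    exact (hpos _ _ d.adj).le

theorem walkWeight_cons {x y z : V} (h : G.Adj x y) (p : G.Walk y z) :
    walkWeight w (Walk.cons h p) = w x y + walkWeight w p := by
  simp only [walkWeight, Walk.darts_cons, List.map_cons, List.sum_cons]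

theorem walkWeight_append {x y z : V} (p : G.Walk x y) (q : G.Walk y z) :
    walkWeight w (p.append q) = walkWeight w p + walkWeight w q := by
  simp only [walkWeight, Walk.darts_append, List.map_append, List.sum_append]

theorem walkWeight_reverse (hsymm : ∀ x y, w x y = w y x) {x y : V} (p : G.Walk x y) :
    walkWeight w p.reverse = walkWeight w p := by
  simp only [walkWeight, Walk.darts_reverse, List.map_reverse, List.sum_reverse, List.map_map]
  exact congrArg List.sum (List.map_congr_left fun d _ ↦ hsymm _ _)

theorem walkWeight_bypass_le (hpos : ∀ x y, G.Adj x y → 0 < w x y) [DecidableEq V] {x y : V}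
    (p : G.Walk x y) : walkWeight w p.bypass ≤ walkWeight w p := by
  obtain ⟨l, hperm, hsub⟩ := List.subperm_of_subset
    (Walk.darts_nodup_of_support_nodup p.bypass_isPath.support_nodup) p.darts_bypass_subset_darts
  rw [walkWeight, ← (hperm.map _).sum_eq]
  refine (hsub.map _).sum_le_sum fun _ hr ↦ ?_
  obtain ⟨d, -, rfl⟩ := List.mem_map.1 hr
  exact (hpos _ _ d.adj).le

theorem gdist_le_walkWeight (hpos : ∀ x y, G.Adj x y → 0 < w x y) {x y : V} (p : G.Walk x y) :
    gdist G w x y ≤ walkWeight w p :=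
  csInf_le ⟨0, fun _ ⟨q, hq⟩ ↦ hq ▸ walkWeight_nonneg w hpos q⟩ ⟨p, rfl⟩

theorem exists_walkWeight_eq_gdist [Fintype V] (hpos : ∀ x y, G.Adj x y → 0 < w x y)
    {x y : V} (hxy : G.Reachable x y) : ∃ p : G.Walk x y, walkWeight w p = gdist G w x y := by
  have : Nonempty (G.Path x y) := ⟨hxy.some.toPath⟩
  obtain ⟨q, hq⟩ := Finite.exists_min fun q : G.Path x y ↦ walkWeight w q.val
  have hleast : IsLeast {c | ∃ p : G.Walk x y, walkWeight w p = c} (walkWeight w q.val) :=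
    ⟨⟨q.val, rfl⟩, by
      rintro _ ⟨r, rfl⟩
      exact (hq r.toPath).trans (walkWeight_bypass_le w hpos r)⟩
  exact ⟨q.val, hleast.csInf_eq.symm⟩

end WalkWeight

section GraphDistance

variable {V : Type*} [Fintype V] {G : SimpleGraph V} {w : V → V → ℝ}

theorem gdist_triangle (hpos : ∀ x y, G.Adj x y → 0 < w x y) (hconn : G.Connected)
    (x y z : V) : gdist G w x z ≤ gdist G w x y + gdist G w y z := by
  obtain ⟨p, hp⟩ := exists_walkWeight_eq_gdist w hpos (hconn x y)
  obtain ⟨q, hq⟩ := exists_walkWeight_eq_gdist w hpos (hconn y z)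
  calc gdist G w x z ≤ walkWeight w (p.append q) := gdist_le_walkWeight w hpos _
    _ = gdist G w x y + gdist G w y z := by rw [walkWeight_append, hp, hq]

theorem gdist_comm (hsymm : ∀ x y, w x y = w y x) (hpos : ∀ x y, G.Adj x y → 0 < w x y)
    (hconn : G.Connected) (x y : V) : gdist G w x y = gdist G w y x := by
  have key : ∀ a b, gdist G w a b ≤ gdist G w b a := fun a b ↦ by
    obtain ⟨p, hp⟩ := exists_walkWeight_eq_gdist w hpos (hconn b a)
    simpa only [walkWeight_reverse w hsymm, hp] using gdist_le_walkWeight w hpos p.reverse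
  exact (key x y).antisymm (key y x)

theorem gdist_pos (hpos : ∀ x y, G.Adj x y → 0 < w x y) (hconn : G.Connected) {x y : V}
    (hxy : x ≠ y) : 0 < gdist G w x y := by
  obtain ⟨p, hp⟩ := exists_walkWeight_eq_gdist w hpos (hconn x y)
  cases p with
  | nil => exact absurd rfl hxy
  | cons h p =>
    rw [← hp, walkWeight_cons]
    exact add_pos_of_pos_of_nonneg (hpos _ _ h) (walkWeight_nonneg w hpos p)

end GraphDistance

section Portals

variable {V : Type*} {S : Finset V} {t f : V → ℝ} {ε : ℝ}

theorem exists_portals_right {D M : ℝ} (hε : 0 ≤ ε) (hD : 0 ≤ D) (hfD : ∀ v ∈ S, D ≤ f v)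
    (hlip : ∀ x ∈ S, ∀ y ∈ S, f x ≤ f y + |t x - t y|) (hM : ∀ x ∈ S, t x - f x ≤ M)
    (p : V) (hp : p ∈ S) :
    ∃ P ⊆ S, ε * D * #P ≤ M - (t p - f p) ∧
      ∀ v ∈ S, t p < t v → ∃ q ∈ insert p P, f q + |t v - t q| ≤ (1 + ε) * f v := by
  set U := S.filter fun v ↦ t p < t v ∧ (1 + ε) * f v < f p + |t v - t p|
  obtain hU | ⟨q, hqU, hqmin⟩ := U.eq_empty_or_nonempty.imp id (U.exists_min_image t)
  · refine ⟨∅, empty_subset _, by simpa using hM p hp, fun v hv hpv ↦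
      ⟨p, mem_insert_self _ _, ?_⟩⟩
    by_contra! h
    exact (eq_empty_iff_forall_notMem.1 hU) v (mem_filter.2 ⟨hv, hpv, h⟩)
  obtain ⟨hqS, hpq, hq_far⟩ := mem_filter.1 hqU
  obtain ⟨P, hPS, hPcard, hPcov⟩ := exists_portals_right hε hD hfD hlip hM q hqS
  refine ⟨insert q P, insert_subset hqS hPS, ?_, fun v hv hpv ↦ ?_⟩
  · have hcard : (#(insert q P) : ℝ) ≤ #P + 1 := by exact_mod_cast card_insert_le q P
    rw [abs_of_pos (sub_pos.2 hpq)] at hq_far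
    nlinarith [mul_le_mul_of_nonneg_left (hfD q hqS) hε,
      mul_le_mul_of_nonneg_left hcard (mul_nonneg hε hD)]
  by_cases hvU : v ∈ U
  · obtain hqv | hqv := (hqmin v hvU).lt_or_eq
    · obtain ⟨r, hr, hcov⟩ := hPcov v hv hqv
      exact ⟨r, mem_insert_of_mem hr, hcov⟩
    · refine ⟨q, mem_insert_of_mem (mem_insert_self q P), ?_⟩
      have := hlip q hqS v hv
      rw [hqv, sub_self, abs_zero] at this ⊢
      nlinarith [mul_nonneg hε (hD.trans (hfD v hv))]
  · refine ⟨p, mem_insert_self _ _, ?_⟩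
    by_contra! h
    exact hvU (mem_filter.2 ⟨hv, hpv, h⟩)
termination_by #(S.filter fun v ↦ t p < t v)
decreasing_by
  refine card_lt_card ⟨fun v hv ↦ ?_, fun h ↦ ?_⟩
  · simp only [mem_filter] at hv ⊢
    exact ⟨hv.1, hpq.trans hv.2⟩
  · exact lt_irrefl _ (mem_filter.1 (h (mem_filter.2 ⟨hqS, hpq⟩))).2

theorem exists_portals (hε : 0 < ε) (hf : ∀ v ∈ S, 0 < f v)
    (hlip : ∀ x ∈ S, ∀ y ∈ S, f x ≤ f y + |t x - t y|)
    (htri : ∀ x ∈ S, ∀ y ∈ S, |t x - t y| ≤ f x + f y) :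
    ∃ P ⊆ S, (#P : ℝ) ≤ 4 / ε + 1 ∧ ∀ v ∈ S, ∃ p ∈ P, f p + |t p - t v| ≤ (1 + ε) * f v := by
  obtain rfl | hS := S.eq_empty_or_nonempty
  · exact ⟨∅, empty_subset _, by simp; positivity, by simp⟩
  obtain ⟨c, hc, hc_min⟩ := S.exists_min_image f hS
  have hfc := hf c hc
  have hM : ∀ x ∈ S, t x - f x ≤ t c + f c := fun x hx ↦ by
    linarith [le_abs_self (t x - t c), htri x hx c hc]
  have hM' : ∀ x ∈ S, -t x - f x ≤ -t c + f c := fun x hx ↦ by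
    linarith [neg_abs_le (t x - t c), htri x hx c hc]
  have hlip' : ∀ x ∈ S, ∀ y ∈ S, f x ≤ f y + |-t x - -t y| := fun x hx y hy ↦ by
    simpa only [neg_sub_neg, abs_sub_comm] using hlip x hx y hy
  obtain ⟨P₁, hP₁S, hP₁card, hP₁cov⟩ :=
    exists_portals_right hε.le hfc.le hc_min hlip hM c hc
  obtain ⟨P₂, hP₂S, hP₂card, hP₂cov⟩ :=
    exists_portals_right hε.le hfc.le hc_min hlip' hM' c hc
  have hcard_le (P : Finset V) (h : ε * f c * #P ≤ 2 * f c) : (#P : ℝ) ≤ 2 / ε := by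
    rw [le_div_iff₀ hε]
    nlinarith
  refine ⟨insert c (P₁ ∪ P₂), insert_subset hc (union_subset hP₁S hP₂S), ?_, fun v hv ↦ ?_⟩
  · have := hcard_le P₁ (by linarith)
    have := hcard_le P₂ (by linarith)
    have : (#(insert c (P₁ ∪ P₂)) : ℝ) ≤ #P₁ + #P₂ + 1 := by
      exact_mod_cast (card_insert_le _ _).trans (Nat.add_le_add_right (card_union_le _ _) 1)
    linarith [show 2 / ε + 2 / ε = 4 / ε by ring]
  obtain hcv | hcv | hcv := lt_trichotomy (t c) (t v)
  · obtain ⟨q, hq, hcov⟩ := hP₁cov v hv hcv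
    refine ⟨q, insert_subset_insert c subset_union_left hq, ?_⟩
    rwa [abs_sub_comm]
  · refine ⟨c, mem_insert_self _ _, ?_⟩
    rw [hcv, sub_self, abs_zero, add_zero]
    nlinarith [hc_min v hv]
  · obtain ⟨q, hq, hcov⟩ := hP₂cov v hv (neg_lt_neg hcv)
    refine ⟨q, insert_subset_insert c subset_union_right hq, ?_⟩
    rwa [neg_sub_neg] at hcov

end Portals

/-- Thorup's portal-set result: for a shortest path `Q` in a finite connected positively
edge-weighted graph `G`, a vertex `u` off `Q`, and `ε > 0`, there is a set `P` of at most
`4/ε + 4` portals on `Q` such that every vertex `v` of `Q` is `(1+ε)`-approximately reached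
from `u` through some portal `p ∈ P` followed by the subpath of `Q` from `p` to `v`. -/
theorem thorup_portal_set {V : Type*} [Fintype V] (G : SimpleGraph V) (w : V → V → ℝ)
    (hsymm : ∀ x y, w x y = w y x) (hpos : ∀ x y, G.Adj x y → 0 < w x y)
    (hconn : G.Connected) {a b : V} (Q : G.Walk a b) (hQ : IsShortestPath G w Q)
    (u : V) (hu : u ∉ Q.support) (ε : ℝ) (hε : 0 < ε) :
    ∃ P : Finset V, (∀ p ∈ P, p ∈ Q.support) ∧ (P.card : ℝ) ≤ 4 / ε + 4 ∧
      ∀ v ∈ Q.support, ∃ p ∈ P,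
        gdist G w u p + pathDist w Q p v ≤ (1 + ε) * gdist G w u v := by
  set t : V → ℝ := fun v ↦ if h : v ∈ Q.support then walkWeight w (Q.takeUntil v h) else 0
  have hpathDist : ∀ x ∈ Q.support, ∀ y ∈ Q.support, pathDist w Q x y = |t x - t y| :=
    fun x hx y hy ↦ by simp only [pathDist, t, dif_pos hx, dif_pos hy]
  have hgdist (x y : V) (hx : x ∈ Q.support.toFinset) (hy : y ∈ Q.support.toFinset) :
      gdist G w x y = |t x - t y| := by
    rw [List.mem_toFinset] at hx hy
    rw [← hQ.2 x hx y hy, hpathDist x hx y hy]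
  obtain ⟨P, hPQ, hPcard, hPcov⟩ := exists_portals (S := Q.support.toFinset) (t := t)
    (f := gdist G w u) hε
    (fun v hv ↦ gdist_pos hpos hconn fun huv ↦ hu (huv ▸ List.mem_toFinset.1 hv))
    (fun x hx y hy ↦ by
      rw [abs_sub_comm, ← hgdist y x hy hx]
      exact gdist_triangle hpos hconn u y x)
    (fun x hx y hy ↦ by
      rw [← hgdist x y hx hy, gdist_comm hsymm hpos hconn u x]
      exact gdist_triangle hpos hconn x u y)
  refine ⟨P, fun p hp ↦ List.mem_toFinset.1 (hPQ hp), by linarith, fun v hv ↦ ?_⟩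
  obtain ⟨p, hp, hcov⟩ := hPcov v (List.mem_toFinset.2 hv)
  exact ⟨p, hp, by rwa [hpathDist p (List.mem_toFinset.1 (hPQ hp)) v hv]⟩
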